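/- Let M be the 2×2 block matrix with blocks M₁₁ = f + o(1) (scalar, f > 0), M₁₂ = M₂₁ᵀ = O(h²) (1×2 block with entries of order h²), and M₂₂ = ν·f·H + o(H) where H = diag(h², h²) and ν > 0. Then for small h, M is invertible and the (1,1) entry of M⁻¹ equals 1/f + o(1). -/

import Mathlib

/-!
Conjugating by `diag(1, h⁻¹, h⁻¹)` turns `M h` into a matrix converging to the invertible
`diag(f, ν f, ν f)`, since the rescaled corner entries are `O(h)` and the rescaled lower block
is `ν f I + o(1)`. Matrix inversion is continuous at an invertible matrix, and a diagonal
conjugation with `1` in the first slot leaves the `(0, 0)` entry of the inverse unchanged.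
-/

open Asymptotics Filter Topology Matrix

namespace Matrix

variable {n K : Type*} [Fintype n] [DecidableEq n] [Field K]

theorem inv_diagonal_of_ne_zero {v : n → K} (hv : ∀ i, v i ≠ 0) :
    (diagonal v)⁻¹ = diagonal v⁻¹ := by
  refine inv_eq_left_inv ?_
  rw [diagonal_mul_diagonal, ← diagonal_one]
  congr with i
  exact inv_mul_cancel₀ (hv i)

theorem inv_diagonal_mul_mul_diagonal_apply {d : n → K} (hd : ∀ i, d i ≠ 0)
    (A : Matrix n n K) (i j : n) :
    (diagonal d * A * diagonal d)⁻¹ i j = (d i)⁻¹ * A⁻¹ i j * (d j)⁻¹ := by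
  rw [mul_inv_rev, mul_inv_rev, inv_diagonal_of_ne_zero hd, ← mul_assoc, mul_diagonal,
    diagonal_mul, Pi.inv_apply, Pi.inv_apply]

theorem isUnit_diagonal_mul_mul_diagonal_iff {d : n → K} (hd : ∀ i, d i ≠ 0)
    {A : Matrix n n K} : IsUnit (diagonal d * A * diagonal d) ↔ IsUnit A := by
  have hD : IsUnit (diagonal d) := isUnit_diagonal.2 (Pi.isUnit_iff.2 fun i => (hd i).isUnit)
  rw [hD.mul_right_iff, hD.mul_left_iff]

variable [TopologicalSpace K] [IsTopologicalRing K]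
  {α : Type*} {l : Filter α} {N : α → Matrix n n K} {N₀ : Matrix n n K}

theorem _root_.Filter.Tendsto.matrix_inv [ContinuousInv₀ K] (hN : Tendsto N l (𝓝 N₀))
    (h₀ : N₀.det ≠ 0) : Tendsto (fun a => (N a)⁻¹) l (𝓝 N₀⁻¹) := by
  refine (continuousAt_matrix_inv N₀ ?_).tendsto.comp hN
  rw [Ring.inverse_eq_inv']
  exact continuousAt_inv₀ h₀

theorem _root_.Filter.Tendsto.eventually_isUnit_matrix [T1Space K] (hN : Tendsto N l (𝓝 N₀))
    (h₀ : N₀.det ≠ 0) : ∀ᶠ a in l, IsUnit (N a) := by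
  filter_upwards [((continuous_id.matrix_det.tendsto N₀).comp hN).eventually_ne h₀] with a ha
  exact (isUnit_iff_isUnit_det _).2 (isUnit_iff_ne_zero.2 ha)

end Matrix

section Rescaling

variable {l : Filter ℝ} {g : ℝ → ℝ}

theorem tendsto_mul_inv_of_isBigO_sq (hl : l ≤ 𝓝 0) (hg : g =O[l] fun h => h ^ 2) :
    Tendsto (fun h => g h * h⁻¹) l (𝓝 0) := by
  refine (hg.mul (isBigO_refl (fun h : ℝ => h⁻¹) l)).trans_tendsto ?_
  have hid : Tendsto (fun h : ℝ => h) l (𝓝 0) := tendsto_id.mono_left hl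
  refine hid.congr fun h => ?_
  rcases eq_or_ne h 0 with rfl | hh
  · simp
  · field_simp

theorem tendsto_inv_mul_of_isBigO_sq (hl : l ≤ 𝓝 0) (hg : g =O[l] fun h => h ^ 2) :
    Tendsto (fun h => h⁻¹ * g h) l (𝓝 0) := by
  simpa only [mul_comm] using tendsto_mul_inv_of_isBigO_sq hl hg

theorem tendsto_inv_mul_mul_inv_of_isLittleO_sq (hl : ∀ᶠ h in l, h ≠ 0) {c : ℝ}
    (hg : (fun h => g h - c * h ^ 2) =o[l] fun h => h ^ 2) :
    Tendsto (fun h => h⁻¹ * g h * h⁻¹) l (𝓝 c) := by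
  have hquot := hg.tendsto_div_nhds_zero.add_const c
  rw [zero_add] at hquot
  refine hquot.congr' ?_
  filter_upwards [hl] with h hh
  field_simp
  ring

end Rescaling

theorem stmt14 (M : ℝ → Matrix (Fin 3) (Fin 3) ℝ) (f ν : ℝ) (hf : 0 < f) (hν : 0 < ν)
    (h00 : Tendsto (fun h => M h 0 0) (𝓝[>] (0 : ℝ)) (𝓝 f))
    (h01 : (fun h => M h 0 1) =O[𝓝[>] (0 : ℝ)] fun h => h ^ 2)
    (h02 : (fun h => M h 0 2) =O[𝓝[>] (0 : ℝ)] fun h => h ^ 2)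
    (h10 : (fun h => M h 1 0) =O[𝓝[>] (0 : ℝ)] fun h => h ^ 2)
    (h20 : (fun h => M h 2 0) =O[𝓝[>] (0 : ℝ)] fun h => h ^ 2)
    (h11 : (fun h => M h 1 1 - ν * f * h ^ 2) =o[𝓝[>] (0 : ℝ)] fun h => h ^ 2)
    (h22 : (fun h => M h 2 2 - ν * f * h ^ 2) =o[𝓝[>] (0 : ℝ)] fun h => h ^ 2)
    (h12 : (fun h => M h 1 2) =o[𝓝[>] (0 : ℝ)] fun h => h ^ 2)
    (h21 : (fun h => M h 2 1) =o[𝓝[>] (0 : ℝ)] fun h => h ^ 2) :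
    (∀ᶠ h in 𝓝[>] (0 : ℝ), IsUnit (M h)) ∧
    Tendsto (fun h => (M h)⁻¹ 0 0) (𝓝[>] (0 : ℝ)) (𝓝 f⁻¹) := by
  set d : ℝ → Fin 3 → ℝ := fun h => ![1, h⁻¹, h⁻¹]
  have hle : 𝓝[>] (0 : ℝ) ≤ 𝓝 0 := nhdsWithin_le_nhds
  have hne : ∀ᶠ h in 𝓝[>] (0 : ℝ), h ≠ 0 := eventually_mem_nhdsWithin.mono fun h hh => ne_of_gt hh
  have hd : ∀ᶠ h in 𝓝[>] (0 : ℝ), ∀ i, d h i ≠ 0 :=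
    hne.mono fun h hh i => by fin_cases i <;> simp [d, hh]
  have hN : Tendsto (fun h => diagonal (d h) * M h * diagonal (d h)) (𝓝[>] 0)
      (𝓝 (diagonal ![f, ν * f, ν * f])) := by
    refine tendsto_pi_nhds.2 fun i => tendsto_pi_nhds.2 fun j => ?_
    simp only [diagonal_mul, mul_diagonal]
    fin_cases i <;> fin_cases j <;>
      simp only [d, Fin.zero_eta, Fin.mk_one, Fin.reduceFinMk, Fin.isValue, cons_val_zero,
        cons_val_one, cons_val, one_mul, mul_one, ne_eq, Fin.reduceEq, zero_ne_one, one_ne_zero,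
        not_false_eq_true, diagonal_apply_eq, diagonal_apply_ne]
    exacts [h00, tendsto_mul_inv_of_isBigO_sq hle h01, tendsto_mul_inv_of_isBigO_sq hle h02,
      tendsto_inv_mul_of_isBigO_sq hle h10, tendsto_inv_mul_mul_inv_of_isLittleO_sq hne h11,
      tendsto_inv_mul_mul_inv_of_isLittleO_sq hne (by simpa using h12),
      tendsto_inv_mul_of_isBigO_sq hle h20,
      tendsto_inv_mul_mul_inv_of_isLittleO_sq hne (by simpa using h21),
      tendsto_inv_mul_mul_inv_of_isLittleO_sq hne h22]
  have hv : ∀ i, ![f, ν * f, ν * f] i ≠ 0 := by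
    intro i; fin_cases i <;> simp [hf.ne', hν.ne']
  have hN₀ : (diagonal ![f, ν * f, ν * f]).det ≠ 0 := by
    rw [det_diagonal]
    exact Finset.prod_ne_zero_iff.2 fun i _ => hv i
  refine ⟨?_, ?_⟩
  · filter_upwards [hN.eventually_isUnit_matrix hN₀, hd] with h hu hdh
    exact (isUnit_diagonal_mul_mul_diagonal_iff hdh).1 hu
  · have hlim := tendsto_pi_nhds.1 (tendsto_pi_nhds.1 (hN.matrix_inv hN₀) 0) 0
    rw [inv_diagonal_of_ne_zero hv, diagonal_apply_eq, Pi.inv_apply, cons_val_zero] at hlim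
    refine hlim.congr' ?_
    filter_upwards [hd] with h hdh
    simp [inv_diagonal_mul_mul_diagonal_apply hdh, d]
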